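/- Let (μ₁, μ₂, μ₃) be an admissible triple of real numbers with P₂ < 0 (negative scalar curvature case). Then C = P₁P₃ < 0 and P₁ = (B − √(B² + 4AC))/(2A), where A = P₂, B = P₁P₂ − P₃ and C = P₁P₃. -/

import Mathlib

/-- Elementary symmetric polynomials in three real variables. -/
noncomputable def P1 (x y z : ℝ) : ℝ := x + y + z
noncomputable def P2 (x y z : ℝ) : ℝ := x * y + x * z + y * z
noncomputable def P3 (x y z : ℝ) : ℝ := x * y * z

noncomputable def qA (x y z : ℝ) : ℝ := P2 x y z
noncomputable def qB (x y z : ℝ) : ℝ := P1 x y z * P2 x y z - P3 x y z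
noncomputable def qC (x y z : ℝ) : ℝ := P1 x y z * P3 x y z

/-!
`P₁` is a root of `A X² − B X − C`, and `(B − 2 A P₁)² = B² + 4AC`, with
`B − 2 A P₁ = −(P₁P₂ + P₃)`. So the formula holds as soon as `P₁P₂ + P₃ ≤ 0`. Admissibility gives
`P₁ > 0` and `P₁P₂ − P₃ = (μ₁ + μ₂)(μ₁ + μ₃)(μ₂ + μ₃) > 0`, hence `P₃ < P₁P₂ < 0` when `P₂ < 0`.
-/

theorem eq_sub_sqrt_div_of_quadratic_eq_zero {a b c x : ℝ} (ha : a ≠ 0)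
    (hroot : a * x ^ 2 - b * x - c = 0) (hle : 2 * a * x ≤ b) :
    x = (b - √(b ^ 2 + 4 * a * c)) / (2 * a) := by
  have hdisc : b ^ 2 + 4 * a * c = (b - 2 * a * x) ^ 2 := by
    linear_combination (-4 * a) * hroot
  rw [hdisc, Real.sqrt_sq (sub_nonneg.mpr hle), eq_div_iff (mul_ne_zero two_ne_zero ha)]
  ring

theorem P1_pos {x y z : ℝ} (hxy : 0 < x + y) (hxz : 0 < x + z) (hyz : 0 < y + z) :
    0 < P1 x y z := by
  unfold P1
  linarith

theorem P1_mul_P2_sub_P3 (x y z : ℝ) :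
    P1 x y z * P2 x y z - P3 x y z = (x + y) * (x + z) * (y + z) := by
  unfold P1 P2 P3
  ring

theorem P3_neg_of_P2_neg {x y z : ℝ} (hxy : 0 < x + y) (hxz : 0 < x + z) (hyz : 0 < y + z)
    (hP2 : P2 x y z < 0) : P3 x y z < 0 := by
  have hprod : 0 < P1 x y z * P2 x y z - P3 x y z := by
    rw [P1_mul_P2_sub_P3]
    positivity
  have hP1P2 : P1 x y z * P2 x y z < 0 := mul_neg_of_pos_of_neg (P1_pos hxy hxz hyz) hP2
  linarith

theorem qA_mul_P1_sq_sub_qB_mul_P1_sub_qC (x y z : ℝ) :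
    qA x y z * P1 x y z ^ 2 - qB x y z * P1 x y z - qC x y z = 0 := by
  unfold qA qB qC
  ring

/-- negative scalar curvature case. For an admissible triple with
P₂ < 0, one has C < 0 and P₁ = (B − √(B² + 4AC))/(2A). -/
theorem stmt_3 (μ₁ μ₂ μ₃ : ℝ)
    (h₁ : μ₁ + μ₂ > 0) (h₂ : μ₁ + μ₃ > 0) (h₃ : μ₂ + μ₃ > 0)
    (hP2 : P2 μ₁ μ₂ μ₃ < 0) :
    qC μ₁ μ₂ μ₃ < 0 ∧
      P1 μ₁ μ₂ μ₃ =
        (qB μ₁ μ₂ μ₃ -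
            Real.sqrt ((qB μ₁ μ₂ μ₃) ^ 2 + 4 * qA μ₁ μ₂ μ₃ * qC μ₁ μ₂ μ₃)) /
          (2 * qA μ₁ μ₂ μ₃) := by
  have hP1 := P1_pos h₁ h₂ h₃
  have hP3 := P3_neg_of_P2_neg h₁ h₂ h₃ hP2
  refine ⟨mul_neg_of_pos_of_neg hP1 hP3, ?_⟩
  apply eq_sub_sqrt_div_of_quadratic_eq_zero hP2.ne (qA_mul_P1_sq_sub_qB_mul_P1_sub_qC _ _ _)
  have hP1P2 : P1 μ₁ μ₂ μ₃ * P2 μ₁ μ₂ μ₃ < 0 := mul_neg_of_pos_of_neg hP1 hP2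
  unfold qB
  linarith
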